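/- arXiv:1604.06162 — 2 statements merged into one kernel-verified Lean document; each statement's English description precedes it below -/
import Mathlib

section
/- Let C^l be the class of functions on an infinite instance space X that equal +1 everywhere except on at most l points (where they equal -1). Then for any t >= 0, the tree shattering coefficient S(C^l, t) equals sum_{i=0}^{l} binom(t, i). -/
/-- A depth-`t` `X`-valued tree: a family of maps `x_s : {-1,+1}^(s-1) → X`. -/
def XTree (X : Type*) (t : ℕ) := (s : Fin t) → (Fin s.val → ℤ) → X

/-- A sign path: a sequence with entries in `{-1,+1}`. -/
def IsSignPath {t : ℕ} (ε : Fin t → ℤ) : Prop := ∀ s, ε s = 1 ∨ ε s = -1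

/-- `S(H, x)`: the set of sign paths realized by some hypothesis `h ∈ H` along the tree `x`,
i.e. `ε_s = h (x_s (ε_1, …, ε_{s-1}))` for all `s`. -/
def realizedPaths {X : Type*} (H : Set (X → ℤ)) {t : ℕ} (x : XTree X t) :
    Set (Fin t → ℤ) :=
  {ε | IsSignPath ε ∧ ∃ h ∈ H, ∀ s : Fin t,
    ε s = h (x s (fun i => ε ⟨i.val, i.isLt.trans s.isLt⟩))}

/-- The tree shattering coefficient `S(H, t)`: the maximum of `|S(H, x)|` over
all depth-`t` `X`-valued trees `x`. -/
noncomputable def treeShatter {X : Type*} (H : Set (X → ℤ)) (t : ℕ) : ℕ :=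
  ⨆ x : XTree X t, (realizedPaths H x).ncard

open Classical in
/-- `C^l`: the class of functions equal to `+1` everywhere except on at most `l` points,
where they equal `-1` (unions of at most `l` singletons). -/
def unionSingletons (X : Type*) (l : ℕ) : Set (X → ℤ) :=
  {h | ∃ A : Set X, A.Finite ∧ A.ncard ≤ l ∧ ∀ a, h a = if a ∈ A then -1 else 1}

/-! Upper bound: the tree analogue of the Sauer–Shelah recursion for
`binomSum m t = Φ_m(t) = ∑_{i ≤ m} (t choose i)`, run on the larger class of sign functions of finite
sets `A ⊇ B` with `|A| ≤ |B| + m`. At the root `p`, the label `+1` is impossible when `p ∈ B`, while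
the label `-1` forces `p ∈ A` and leaves the class for `(insert p B, m - 1)` (empty when `m = 0`).
So the two subtrees contribute at most `0 + Φ_m(t)`, `Φ_m(t) + 0`, or
`Φ_{m+1}(t) + Φ_m(t) = Φ_{m+1}(t+1)`.

Lower bound: a tree with one fresh point per level realizes exactly the sign vectors of the subsets
of `Fin t` of size at most `l`. -/

def binomSum (m t : ℕ) : ℕ := ∑ i ∈ Finset.range (m + 1), t.choose i

lemma binomSum_zero_right (m : ℕ) : binomSum m 0 = 1 := by
  simp [binomSum, Finset.sum_range_succ', Nat.choose_zero_succ]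

lemma binomSum_le_succ (m t : ℕ) : binomSum m t ≤ binomSum m (t + 1) :=
  Finset.sum_le_sum fun i _ => Nat.choose_le_choose i t.le_succ

lemma binomSum_succ_succ (m t : ℕ) :
    binomSum (m + 1) (t + 1) = binomSum (m + 1) t + binomSum m t := by
  simp only [binomSum, Finset.sum_range_succ' _ (m + 1), Nat.choose_succ_succ,
    Nat.choose_zero_right, Finset.sum_add_distrib]
  ring

lemma card_biUnion_powersetCard {α : Type*} [DecidableEq α] (s : Finset α) (m : ℕ) :
    ((Finset.range (m + 1)).biUnion fun i => s.powersetCard i).card = binomSum m s.card := by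
  rw [Finset.card_biUnion fun i _ j _ hij => Finset.pairwise_disjoint_powersetCard s hij]
  simp only [Finset.card_powersetCard, binomSum]

lemma ncard_setOf_card_le {α : Type*} [Fintype α] (m : ℕ) :
    {S : Finset α | S.card ≤ m}.ncard = binomSum m (Fintype.card α) := by
  classical
  have hS : {S : Finset α | S.card ≤ m} =
      ↑((Finset.range (m + 1)).biUnion fun i => (Finset.univ : Finset α).powersetCard i) := by
    ext S
    simp
  rw [hS, Set.ncard_coe_finset, card_biUnion_powersetCard, Finset.card_univ]

section SignFunctions

variable {X : Type*}

open Classical in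
noncomputable def signOf (A : Set X) : X → ℤ := fun a => if a ∈ A then -1 else 1

@[simp]
lemma signOf_of_mem {A : Set X} {a : X} (ha : a ∈ A) : signOf A a = -1 := if_pos ha

@[simp]
lemma signOf_of_notMem {A : Set X} {a : X} (ha : a ∉ A) : signOf A a = 1 := if_neg ha

lemma signOf_eq_neg_one_iff {A : Set X} {a : X} : signOf A a = -1 ↔ a ∈ A := by
  by_cases ha : a ∈ A <;> simp [ha]

lemma signOf_injective : Function.Injective (signOf (X := X)) := fun A A' h =>
  Set.ext fun a => by rw [← signOf_eq_neg_one_iff, ← signOf_eq_neg_one_iff, h]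

lemma isSignPath_signOf {t : ℕ} (A : Set (Fin t)) : IsSignPath (signOf A) := fun s => by
  by_cases hs : s ∈ A <;> simp [hs]

lemma mem_unionSingletons {l : ℕ} {h : X → ℤ} :
    h ∈ unionSingletons X l ↔ ∃ A : Set X, A.Finite ∧ A.ncard ≤ l ∧ h = signOf A := by
  simp only [unionSingletons, Set.mem_ofPred_eq, funext_iff, signOf]

def signClassAbove (B : Set X) (m : ℕ) : Set (X → ℤ) :=
  {h | ∃ A : Set X, A.Finite ∧ B ⊆ A ∧ A.ncard ≤ B.ncard + m ∧ h = signOf A}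

lemma unionSingletons_eq_signClassAbove_empty (l : ℕ) :
    unionSingletons X l = signClassAbove ∅ l := by
  ext h
  simp [mem_unionSingletons, signClassAbove]

lemma signClassAbove_inter_pos_eq_empty {B : Set X} {p : X} (hp : p ∈ B) (m : ℕ) :
    signClassAbove B m ∩ {h | h p = 1} = ∅ := by
  ext h
  simp only [signClassAbove, Set.mem_inter_iff, Set.mem_ofPred_eq, Set.mem_empty_iff_false,
    iff_false, not_and]
  rintro ⟨A, -, hBA, -, rfl⟩
  simp [hBA hp]

lemma signClassAbove_zero_inter_neg_eq_empty {B : Set X} {p : X} (hp : p ∉ B) :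
    signClassAbove B 0 ∩ {h | h p = -1} = ∅ := by
  ext h
  simp only [signClassAbove, Set.mem_inter_iff, Set.mem_ofPred_eq, Set.mem_empty_iff_false,
    iff_false, not_and, add_zero]
  rintro ⟨A, hA, hBA, hcard, rfl⟩
  rw [← Set.eq_of_subset_of_ncard_le hBA hcard hA]
  simp [hp]

lemma signClassAbove_succ_inter_neg {B : Set X} (hB : B.Finite) {p : X} (hp : p ∉ B)
    (m : ℕ) : signClassAbove B (m + 1) ∩ {h | h p = -1} = signClassAbove (insert p B) m := by
  ext h
  simp only [signClassAbove, Set.mem_inter_iff, Set.mem_ofPred_eq,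
    Set.ncard_insert_of_notMem hp hB, add_right_comm _ 1 m, add_assoc]
  constructor
  · rintro ⟨⟨A, hA, hBA, hcard, rfl⟩, hpA⟩
    exact ⟨A, hA, Set.insert_subset (signOf_eq_neg_one_iff.1 hpA) hBA, hcard, rfl⟩
  · rintro ⟨A, hA, hBA, hcard, rfl⟩
    exact ⟨⟨A, hA, (Set.subset_insert p B).trans hBA, hcard, rfl⟩,
      signOf_of_mem (hBA (Set.mem_insert p B))⟩

end SignFunctions

namespace XTree

variable {X : Type*} {t : ℕ}

def root (x : XTree X (t + 1)) : X := x ⟨0, t.succ_pos⟩ Fin.elim0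

def subtree (x : XTree X (t + 1)) (σ : ℤ) : XTree X t := fun s ρ => x s.succ (Fin.cons σ ρ)

def ofLevels (e : Fin t → X) : XTree X t := fun s _ => e s

end XTree

section RealizedPaths

variable {X : Type*} {t : ℕ}

lemma realizedPaths_finite (H : Set (X → ℤ)) (x : XTree X t) : (realizedPaths H x).Finite :=
  (Set.Finite.pi' fun _ => (Set.finite_singleton (-1 : ℤ)).insert 1).subset fun _ hε => hε.1

lemma realizedPaths_empty (x : XTree X t) : realizedPaths (∅ : Set (X → ℤ)) x = ∅ := by
  simp [realizedPaths]

lemma ncard_realizedPaths_mono {H H' : Set (X → ℤ)} (hH : H ⊆ H') (x : XTree X t) :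
    (realizedPaths H x).ncard ≤ (realizedPaths H' x).ncard :=
  Set.ncard_le_ncard (fun _ ⟨hε, h, hh, hx⟩ => ⟨hε, h, hH hh, hx⟩) (realizedPaths_finite H' x)

lemma ncard_realizedPaths_le_one (H : Set (X → ℤ)) (x : XTree X 0) :
    (realizedPaths H x).ncard ≤ 1 :=
  (Set.ncard_le_one (realizedPaths_finite H x)).2 fun _ _ _ _ => funext fun i => i.elim0

lemma tail_mem_realizedPaths_subtree {H : Set (X → ℤ)} {x : XTree X (t + 1)}
    {ε : Fin (t + 1) → ℤ} (hε : ε ∈ realizedPaths H x) :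
    Fin.tail ε ∈ realizedPaths (H ∩ {h | h x.root = ε 0}) (x.subtree (ε 0)) := by
  obtain ⟨hsign, h, hh, hpath⟩ := hε
  have hprefix (s : Fin t) : (fun i : Fin (s.val + 1) => ε ⟨i.val, i.isLt.trans s.succ.isLt⟩) =
      Fin.cons (ε 0) fun i : Fin s.val => Fin.tail ε ⟨i.val, i.isLt.trans s.isLt⟩ := by
    funext i
    cases i using Fin.cases <;> rfl
  refine ⟨fun s => hsign s.succ, h, ⟨hh, ?_⟩, fun s => ?_⟩
  · exact ((hpath 0).trans (congrArg h (congrArg _ (funext fun i => i.elim0)))).symm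
  · exact (hpath s.succ).trans (congrArg h (congrArg _ (hprefix s)))

lemma realizedPaths_subset_union_subtree (H : Set (X → ℤ)) (x : XTree X (t + 1)) :
    realizedPaths H x ⊆
      Fin.cons 1 '' realizedPaths (H ∩ {h | h x.root = 1}) (x.subtree 1) ∪
      Fin.cons (-1) '' realizedPaths (H ∩ {h | h x.root = -1}) (x.subtree (-1)) := by
  intro ε hε
  have hmem := tail_mem_realizedPaths_subtree hε
  rcases hε.1 0 with h0 | h0
  · exact Or.inl ⟨_, h0 ▸ hmem, h0 ▸ Fin.cons_self_tail ε⟩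
  · exact Or.inr ⟨_, h0 ▸ hmem, h0 ▸ Fin.cons_self_tail ε⟩

lemma ncard_realizedPaths_le_add (H : Set (X → ℤ)) (x : XTree X (t + 1)) :
    (realizedPaths H x).ncard ≤
      (realizedPaths (H ∩ {h | h x.root = 1}) (x.subtree 1)).ncard +
      (realizedPaths (H ∩ {h | h x.root = -1}) (x.subtree (-1))).ncard := by
  refine (Set.ncard_le_ncard (realizedPaths_subset_union_subtree H x)
    (((realizedPaths_finite _ _).image _).union ((realizedPaths_finite _ _).image _))).trans ?_
  refine (Set.ncard_union_le _ _).trans_eq ?_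
  rw [Set.ncard_image_of_injective _ (Fin.cons_right_injective _),
    Set.ncard_image_of_injective _ (Fin.cons_right_injective _)]

end RealizedPaths

section Bounds

variable {X : Type*}

theorem ncard_realizedPaths_signClassAbove_le (t : ℕ) :
    ∀ {B : Set X}, B.Finite → ∀ (m : ℕ) (x : XTree X t),
      (realizedPaths (signClassAbove B m) x).ncard ≤ binomSum m t := by
  induction t with
  | zero => exact fun _ m x => (ncard_realizedPaths_le_one _ x).trans_eq (binomSum_zero_right m).symm
  | succ t ih =>
    intro B hB m x
    refine (ncard_realizedPaths_le_add _ x).trans ?_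
    have hsubclass (σ : ℤ) : (realizedPaths (signClassAbove B m ∩ {h | h x.root = σ})
        (x.subtree σ)).ncard ≤ binomSum m t :=
      (ncard_realizedPaths_mono Set.inter_subset_left _).trans (ih hB m _)
    by_cases hpB : x.root ∈ B
    · rw [signClassAbove_inter_pos_eq_empty hpB, realizedPaths_empty, Set.ncard_empty, zero_add]
      exact (hsubclass (-1)).trans (binomSum_le_succ m t)
    cases m with
    | zero =>
      rw [signClassAbove_zero_inter_neg_eq_empty hpB, realizedPaths_empty, Set.ncard_empty,
        add_zero]
      exact (hsubclass 1).trans (binomSum_le_succ 0 t)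
    | succ m =>
      rw [signClassAbove_succ_inter_neg hB hpB, binomSum_succ_succ]
      exact add_le_add (hsubclass 1) (ih (hB.insert _) m _)

lemma ncard_realizedPaths_unionSingletons_le (l : ℕ) {t : ℕ} (x : XTree X t) :
    (realizedPaths (unionSingletons X l) x).ncard ≤ binomSum l t := by
  rw [unionSingletons_eq_signClassAbove_empty]
  exact ncard_realizedPaths_signClassAbove_le t Set.finite_empty l x

lemma realizedPaths_unionSingletons_ofLevels (l : ℕ) {t : ℕ} {e : Fin t → X}
    (he : Function.Injective e) :
    realizedPaths (unionSingletons X l) (XTree.ofLevels e) =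
      (fun S : Finset (Fin t) => signOf (S : Set (Fin t))) '' {S | S.card ≤ l} := by
  have hpath (A : Set X) (ε : Fin t → ℤ) :
      (∀ s, ε s = signOf A (e s)) ↔ ε = signOf (e ⁻¹' A) := funext_iff.symm
  ext ε
  simp only [realizedPaths, XTree.ofLevels, mem_unionSingletons, Set.mem_ofPred_eq,
    Set.mem_image]
  constructor
  · rintro ⟨-, _, ⟨A, hA, hcard, rfl⟩, hε⟩
    have hfin : (e ⁻¹' A).Finite := hA.preimage he.injOn
    refine ⟨hfin.toFinset, ?_, by rw [Set.Finite.coe_toFinset, (hpath A ε).1 hε]⟩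
    rw [← Set.ncard_eq_toFinset_card _ hfin]
    exact (Set.ncard_le_ncard_of_injOn e (fun _ hs => hs) he.injOn hA).trans hcard
  · rintro ⟨S, hS, rfl⟩
    refine ⟨isSignPath_signOf _, _, ⟨e '' S, S.finite_toSet.image e, ?_, rfl⟩, ?_⟩
    · rwa [Set.ncard_image_of_injective _ he, Set.ncard_coe_finset]
    · rw [hpath, Set.preimage_image_eq _ he]

lemma binomSum_le_ncard_realizedPaths_unionSingletons [Infinite X] (l t : ℕ) :
    ∃ x : XTree X t, binomSum l t ≤ (realizedPaths (unionSingletons X l) x).ncard := by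
  let e : Fin t → X := fun s => Infinite.natEmbedding X s
  have he : Function.Injective e := (Infinite.natEmbedding X).injective.comp Fin.val_injective
  refine ⟨XTree.ofLevels e, le_of_eq ?_⟩
  rw [realizedPaths_unionSingletons_ofLevels l he,
    Set.ncard_image_of_injective _ (f := fun S : Finset (Fin t) => signOf (S : Set (Fin t)))
      (signOf_injective.comp Finset.coe_injective),
    ncard_setOf_card_le, Fintype.card_fin]

end Bounds

theorem stmt11 {X : Type*} [Infinite X] (l t : ℕ) :
    treeShatter (unionSingletons X l) t = ∑ i ∈ Finset.range (l + 1), t.choose i := by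
  have : Nonempty (XTree X t) := ⟨fun _ _ => Classical.arbitrary X⟩
  have hbdd : BddAbove (Set.range fun x : XTree X t =>
      (realizedPaths (unionSingletons X l) x).ncard) :=
    ⟨binomSum l t, Set.forall_mem_range.2 (ncard_realizedPaths_unionSingletons_le l)⟩
  obtain ⟨x, hx⟩ := binomSum_le_ncard_realizedPaths_unionSingletons (X := X) l t
  exact le_antisymm (ciSup_le (ncard_realizedPaths_unionSingletons_le l))
    (hx.trans (le_ciSup hbdd x))
end

section
/- If a hypothesis class H has Extended Littlestone dimension ELdim(H, k) >= t, then the tree shattering coefficient satisfies S(H, t) >= sum_{i=0}^{k+1} binom(t, i). -/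
/-- An extended mistake tree: leaves are labeled by hypotheses, and each internal node
carries an example `a : X`, the label `y ∈ {-1,+1}` of its dashed downward edge
(the dashed edge goes to the child labeled `y`), and the two subtrees
(first the `-1`-child, then the `+1`-child). -/
inductive EMT (X : Type*) where
  | leaf : (X → ℤ) → EMT X
  | node : X → ℤ → EMT X → EMT X → EMT X

/-- Validity of an extended mistake tree for the class `H`: the dashed-edge labels are in
`{-1,+1}` and every leaf is labeled by a hypothesis of `H` consistent with the
root-to-leaf path (and satisfying the accumulated constraint `P`). -/
def EMT.ValidFrom {X : Type*} (H : Set (X → ℤ)) (P : (X → ℤ) → Prop) : EMT X → Prop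
  | .leaf h => h ∈ H ∧ P h
  | .node a y tneg tpos => (y = 1 ∨ y = -1) ∧
      EMT.ValidFrom H (fun h => P h ∧ h a = -1) tneg ∧
      EMT.ValidFrom H (fun h => P h ∧ h a = 1) tpos

/-- The set of pairs `(number of solid edges, length)` of root-to-leaf paths of an
extended mistake tree. An edge to a child is solid iff that child is not the one the
dashed edge points to. -/
def EMT.paths {X : Type*} : EMT X → Set (ℕ × ℕ)
  | .leaf _ => {(0, 0)}
  | .node _ y tneg tpos =>
      (fun p => (p.1 + (if y = -1 then 0 else 1), p.2 + 1)) '' EMT.paths tneg ∪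
      (fun p => (p.1 + (if y = 1 then 0 else 1), p.2 + 1)) '' EMT.paths tpos

/-- A tree is `(k,m)`-difficult iff every root-to-leaf path using at most `k` solid
edges has length at least `m`. -/
def EMT.Difficult {X : Type*} (T : EMT X) (k m : ℕ) : Prop :=
  ∀ p ∈ T.paths, p.1 ≤ k → m ≤ p.2

namespace XTree

variable {X : Type*} {t : ℕ}

instance [Nonempty X] : Nonempty (XTree X t) :=
  inferInstanceAs (Nonempty ((s : Fin t) → (Fin s.val → ℤ) → X))

/-- The tree asking `a` first and continuing with the subtree `x c` after the answer `c`. -/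
def node (a : X) (x : ℤ → XTree X t) : XTree X (t + 1) :=
  Fin.cases (motive := fun s => (Fin s.val → ℤ) → X) (fun _ => a)
    (fun s (pre : Fin (s.val + 1) → ℤ) => x (pre 0) s (Fin.tail pre))

end XTree

section

variable {X : Type*}

lemma realizedPaths_subset_setOf_isSignPath (H : Set (X → ℤ)) {t : ℕ} (x : XTree X t) :
    realizedPaths H x ⊆ {ε | IsSignPath ε} :=
  fun _ hε => hε.1

lemma finite_setOf_isSignPath (t : ℕ) : {ε : Fin t → ℤ | IsSignPath ε}.Finite :=
  (Set.Finite.pi' fun _ => (Set.finite_singleton (-1 : ℤ)).insert 1).subset fun _ hε s => hε s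

lemma finite_realizedPaths (H : Set (X → ℤ)) {t : ℕ} (x : XTree X t) :
    (realizedPaths H x).Finite :=
  (finite_setOf_isSignPath t).subset (realizedPaths_subset_setOf_isSignPath H x)

lemma bddAbove_ncard_realizedPaths (H : Set (X → ℤ)) (t : ℕ) :
    BddAbove (Set.range fun x : XTree X t => (realizedPaths H x).ncard) :=
  ⟨_, Set.forall_mem_range.2 fun x =>
    Set.ncard_le_ncard (realizedPaths_subset_setOf_isSignPath H x) (finite_setOf_isSignPath t)⟩

lemma ncard_realizedPaths_le_treeShatter (H : Set (X → ℤ)) {t : ℕ} (x : XTree X t) :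
    (realizedPaths H x).ncard ≤ treeShatter H t :=
  le_ciSup (bddAbove_ncard_realizedPaths H t) x

lemma exists_ncard_realizedPaths_eq_treeShatter (H : Set (X → ℤ)) (t : ℕ)
    [Nonempty (XTree X t)] : ∃ x : XTree X t, (realizedPaths H x).ncard = treeShatter H t :=
  Nat.sSup_mem (Set.range_nonempty _) (bddAbove_ncard_realizedPaths H t)

lemma cons_mem_realizedPaths_node {H : Set (X → ℤ)} {t : ℕ} {a : X} {x : ℤ → XTree X t}
    {c : ℤ} (hc : c = 1 ∨ c = -1) {ε : Fin t → ℤ}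
    (hε : ε ∈ realizedPaths {h ∈ H | h a = c} (x c)) :
    Fin.cons c ε ∈ realizedPaths H (XTree.node a x) := by
  obtain ⟨hsign, h, ⟨hH, hac⟩, hh⟩ := hε
  exact ⟨Fin.cases hc hsign, h, hH, Fin.cases hac.symm hh⟩

lemma treeShatter_add_le (H : Set (X → ℤ)) (t : ℕ) (a : X) :
    treeShatter {h ∈ H | h a = -1} t + treeShatter {h ∈ H | h a = 1} t
      ≤ treeShatter H (t + 1) := by
  have : Nonempty X := ⟨a⟩
  obtain ⟨xneg, hneg⟩ := exists_ncard_realizedPaths_eq_treeShatter {h ∈ H | h a = -1} t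
  obtain ⟨xpos, hpos⟩ := exists_ncard_realizedPaths_eq_treeShatter {h ∈ H | h a = 1} t
  let x : ℤ → XTree X t := fun c => if c = -1 then xneg else xpos
  let Sneg : Set (Fin (t + 1) → ℤ) := Fin.cons (-1) '' realizedPaths {h ∈ H | h a = -1} (x (-1))
  let Spos : Set (Fin (t + 1) → ℤ) := Fin.cons 1 '' realizedPaths {h ∈ H | h a = 1} (x 1)
  have hsub : Sneg ∪ Spos ⊆ realizedPaths H (XTree.node a x) := by
    rintro _ (⟨ε, hε, rfl⟩ | ⟨ε, hε, rfl⟩)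
    · exact cons_mem_realizedPaths_node (.inr rfl) hε
    · exact cons_mem_realizedPaths_node (.inl rfl) hε
  have hdisj : Disjoint Sneg Spos := by
    refine Set.disjoint_left.2 ?_
    rintro _ ⟨ε, -, rfl⟩ ⟨ε', -, h⟩
    simpa using congrFun h 0
  calc treeShatter {h ∈ H | h a = -1} t + treeShatter {h ∈ H | h a = 1} t
      = (Sneg ∪ Spos).ncard := by
        rw [Set.ncard_union_eq hdisj ((finite_realizedPaths _ _).image _)
            ((finite_realizedPaths _ _).image _),
          Set.ncard_image_of_injective _ (Fin.cons_right_injective _),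
          Set.ncard_image_of_injective _ (Fin.cons_right_injective _)]
        simp [x, hneg, hpos]
    _ ≤ (realizedPaths H (XTree.node a x)).ncard :=
        Set.ncard_le_ncard hsub (finite_realizedPaths _ _)
    _ ≤ treeShatter H (t + 1) := ncard_realizedPaths_le_treeShatter H _

lemma one_le_treeShatter_zero {H : Set (X → ℤ)} (hH : H.Nonempty) : 1 ≤ treeShatter H 0 := by
  obtain ⟨h, hh⟩ := hH
  let x : XTree X 0 := fun s => s.elim0
  have : (realizedPaths H x).Nonempty := ⟨Fin.elim0, Fin.rec0, h, hh, Fin.rec0⟩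
  exact ((Set.ncard_pos (finite_realizedPaths H x)).2 this).trans_le
    (ncard_realizedPaths_le_treeShatter H x)

lemma one_le_treeShatter [Nonempty X] {H : Set (X → ℤ)} (hH : H.Nonempty)
    (hsign : ∀ h ∈ H, ∀ a : X, h a = 1 ∨ h a = -1) (t : ℕ) : 1 ≤ treeShatter H t := by
  induction t generalizing H with
  | zero => exact one_le_treeShatter_zero hH
  | succ t ih =>
    obtain ⟨h, hh⟩ := hH
    let a : X := Classical.arbitrary X
    have hsign' (c : ℤ) : ∀ g ∈ {g ∈ H | g a = c}, ∀ b, g b = 1 ∨ g b = -1 :=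
      fun g hg => hsign g hg.1
    refine le_trans ?_ (treeShatter_add_le H t a)
    rcases hsign h hh a with hc | hc
    · exact (ih (H := {g ∈ H | g a = 1}) ⟨h, hh, hc⟩ (hsign' 1)).trans (Nat.le_add_left _ _)
    · exact (ih (H := {g ∈ H | g a = -1}) ⟨h, hh, hc⟩ (hsign' (-1))).trans
        (Nat.le_add_right _ _)

end

lemma sum_range_choose_eq_one {m t : ℕ} (h : m = 0 ∨ t = 0) :
    ∑ i ∈ Finset.range (m + 1), t.choose i = 1 := by
  rcases h with rfl | rfl <;> simp [Finset.sum_range_succ']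

lemma sum_range_choose_succ (m t : ℕ) :
    ∑ i ∈ Finset.range (m + 2), (t + 1).choose i =
      ∑ i ∈ Finset.range (m + 2), t.choose i + ∑ i ∈ Finset.range (m + 1), t.choose i := by
  rw [Finset.sum_range_succ' _ (m + 1), Finset.sum_range_succ' (t.choose ·) (m + 1)]
  simp only [Nat.choose_succ_succ, Finset.sum_add_distrib, Nat.choose_zero_right]
  ring

namespace EMT

variable {X : Type*}

lemma ValidFrom.exists_mem {H : Set (X → ℤ)} {P : (X → ℤ) → Prop} {T : EMT X}
    (hT : T.ValidFrom H P) : ∃ h ∈ H, P h := by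
  induction T generalizing P with
  | leaf h => exact ⟨h, hT⟩
  | node a y l r ihl =>
    obtain ⟨h, hH, hP, -⟩ := ihl hT.2.1
    exact ⟨h, hH, hP⟩

end EMT

section

variable {X : Type*} [Nonempty X] {H : Set (X → ℤ)}

theorem sum_choose_le_treeShatter (hsign : ∀ h ∈ H, ∀ a : X, h a = 1 ∨ h a = -1)
    {P : (X → ℤ) → Prop} {T : EMT X} (hT : T.ValidFrom H P) {m t : ℕ}
    (hdiff : ∀ p ∈ T.paths, p.1 < m → t ≤ p.2) :
    ∑ i ∈ Finset.range (m + 1), t.choose i ≤ treeShatter {h ∈ H | P h} t := by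
  have base {P : (X → ℤ) → Prop} {T : EMT X} (hT : T.ValidFrom H P) {m t : ℕ}
      (hmt : m = 0 ∨ t = 0) :
      ∑ i ∈ Finset.range (m + 1), t.choose i ≤ treeShatter {h ∈ H | P h} t :=
    (sum_range_choose_eq_one hmt).trans_le
      (one_le_treeShatter hT.exists_mem (fun h hh => hsign h hh.1) t)
  induction T generalizing P m t with
  | leaf h => exact base hT (by have := hdiff (0, 0) rfl; omega)
  | node a y l r ihl ihr =>
    obtain _ | m := m
    · exact base hT (.inl rfl)
    obtain _ | t := t
    · exact base hT (.inr rfl)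
    obtain ⟨hy, hl, hr⟩ := hT
    have hdiffl (p) (hp : p ∈ l.paths) (hpm : p.1 + (if y = -1 then 0 else 1) < m + 1) :
        t ≤ p.2 :=
      Nat.le_of_succ_le_succ (hdiff _ (.inl ⟨p, hp, rfl⟩) hpm)
    have hdiffr (p) (hp : p ∈ r.paths) (hpm : p.1 + (if y = 1 then 0 else 1) < m + 1) :
        t ≤ p.2 :=
      Nat.le_of_succ_le_succ (hdiff _ (.inr ⟨p, hp, rfl⟩) hpm)
    have hsplit := treeShatter_add_le {h ∈ H | P h} t a
    have hsep (c : ℤ) : {g ∈ {g ∈ H | P g} | g a = c} = {g ∈ H | P g ∧ g a = c} :=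
      Set.ext fun _ => and_assoc
    rw [hsep, hsep] at hsplit
    rw [sum_range_choose_succ]
    rcases hy with rfl | rfl
    · simp only [show (1 : ℤ) ≠ -1 by decide, if_true, if_false, add_zero,
        add_lt_add_iff_right] at hdiffl hdiffr
      rw [add_comm] at hsplit
      exact (add_le_add (ihr hr hdiffr) (ihl hl hdiffl)).trans hsplit
    · simp only [show (-1 : ℤ) ≠ 1 by decide, if_true, if_false, add_zero,
        add_lt_add_iff_right] at hdiffl hdiffr
      exact (add_le_add (ihl hl hdiffl) (ihr hr hdiffr)).trans hsplit

end

theorem stmt14 {X : Type*} (H : Set (X → ℤ))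
    (hsign : ∀ h ∈ H, ∀ a : X, h a = 1 ∨ h a = -1)
    (k t : ℕ)
    (hELdim : ∃ T : EMT X, T.ValidFrom H (fun _ => True) ∧ T.Difficult k t) :
    ∑ i ∈ Finset.range (k + 2), t.choose i ≤ treeShatter H t := by
  obtain ⟨T, hT, hdiff⟩ := hELdim
  have hdiff_lt (p) (hp : p ∈ T.paths) (hpk : p.1 < k + 1) : t ≤ p.2 :=
    hdiff p hp (Nat.lt_succ_iff.mp hpk)
  cases T with
  | leaf h =>
    obtain rfl : t = 0 := Nat.le_zero.mp (hdiff_lt (0, 0) rfl k.succ_pos)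
    exact (sum_range_choose_eq_one (.inr rfl)).trans_le (one_le_treeShatter_zero ⟨h, hT.1⟩)
  | node a =>
    have : Nonempty X := ⟨a⟩
    simpa using sum_choose_le_treeShatter hsign hT hdiff_lt
end
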